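/- Let X = ℓ_2(ℤ_+) over ℂ. If T ∈ B_1(X) is such that the generalized kernel ⋃_{k∈ℕ} ker(T^k) is dense in X, then T belongs to the SOT*-closure of the set N_1(X) of nilpotent contractions (operators S ∈ B_1(X) with S^k = 0 for some k ∈ ℕ). -/

import Mathlib

open Filter Topology Metric
open scoped ENNReal

noncomputable section

/-- The strong* operator topology (SOT*) on the space of bounded operators on `X`:
the coarsest topology making all evaluation maps `T ↦ T x` (into `X` with its norm
topology) and all maps `T ↦ T* x* = x* ∘ T` (into `X*` with its norm topology)
continuous. -/
def sotStarOp (X : Type*) [NormedAddCommGroup X] [NormedSpace ℂ X] :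
    TopologicalSpace (X →L[ℂ] X) :=
  (⨅ x : X, TopologicalSpace.induced (fun T : X →L[ℂ] X => T x) inferInstance) ⊓
    (⨅ f : X →L[ℂ] ℂ, TopologicalSpace.induced (fun T : X →L[ℂ] X => f.comp T) inferInstance)

/-- The ball `B_M(X)` of operators of norm at most `M`, with the topology induced by SOT*. -/
def sotStarBall (X : Type*) [NormedAddCommGroup X] [NormedSpace ℂ X] (M : ℝ) :
    TopologicalSpace {T : X →L[ℂ] X // ‖T‖ ≤ M} :=
  TopologicalSpace.induced Subtype.val (sotStarOp X)

/-!
Let `P k` be the orthogonal projection onto `ker (T ^ k)`. Since `ker (T ^ k)` is `T`-invariant,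
`P k * T * P k = T * P k`, hence `(T * P k) ^ (k + 1) = T ^ (k + 1) * P k = 0`: the contractions
`T * P k` are nilpotent. The kernels increase and have dense union, so `P k → 1` strongly. Thus
`T * P k → T` strongly, and, `P k` being self-adjoint, `(T * P k)† = P k * T† → T†`
strongly, which by the Riesz representation is the convergence `x* ∘ (T * P k) → x* ∘ T`
in `X*`.
-/

open ContinuousLinearMap

section SotStar

variable {X : Type*} [NormedAddCommGroup X] [NormedSpace ℂ X] {ι : Type*} {l : Filter ι}

theorem tendsto_sotStarOp_iff {A : ι → X →L[ℂ] X} {B : X →L[ℂ] X} :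
    Tendsto A l (@nhds _ (sotStarOp X) B) ↔
      (∀ x, Tendsto (fun i => A i x) l (𝓝 (B x))) ∧
        ∀ f : X →L[ℂ] ℂ, Tendsto (fun i => f.comp (A i)) l (𝓝 (f.comp B)) := by
  rw [sotStarOp, @_root_.nhds_inf _ (⨅ x : X, _) (⨅ f : X →L[ℂ] ℂ, _), tendsto_inf,
    _root_.nhds_iInf, _root_.nhds_iInf, tendsto_iInf, tendsto_iInf]
  simp only [nhds_induced, tendsto_comap_iff]
  rfl

theorem tendsto_sotStarBall_iff {M : ℝ} {A : ι → {T : X →L[ℂ] X // ‖T‖ ≤ M}}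
    {B : {T : X →L[ℂ] X // ‖T‖ ≤ M}} :
    Tendsto A l (@nhds _ (sotStarBall X M) B) ↔
      Tendsto (fun i => (A i).1) l (@nhds _ (sotStarOp X) B.1) := by
  rw [sotStarBall, @nhds_induced _ _ (sotStarOp X), tendsto_comap_iff]
  rfl

end SotStar

section Hilbert

variable {𝕜 E : Type*} [RCLike 𝕜] [NormedAddCommGroup E] [InnerProductSpace 𝕜 E]

theorem norm_comp_eq_norm_adjoint_toDual_symm [CompleteSpace E] (f : E →L[𝕜] 𝕜)
    (A : E →L[𝕜] E) :
    ‖f.comp A‖ = ‖adjoint A ((InnerProductSpace.toDual 𝕜 E).symm f)‖ := by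
  set y := (InnerProductSpace.toDual 𝕜 E).symm f
  have : f.comp A = InnerProductSpace.toDual 𝕜 E (adjoint A y) := by
    ext x
    rw [comp_apply, InnerProductSpace.toDual_apply_apply, adjoint_inner_left,
      ← InnerProductSpace.toDual_apply_apply, LinearIsometryEquiv.apply_symm_apply]
  rw [this, LinearIsometryEquiv.norm_map]

theorem tendsto_starProjection_self_of_dense_iUnion {ι : Type*} [Preorder ι]
    (U : ι → Submodule 𝕜 E) [∀ i, (U i).HasOrthogonalProjection] (hU : Monotone U)
    (hdense : Dense (⋃ i, (U i : Set E))) (x : E) :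
    Tendsto (fun i => (U i).starProjection x) atTop (𝓝 x) := by
  refine Submodule.starProjection_tendsto_self U hU x ?_
  have : Dense ((⨆ i, U i : Submodule 𝕜 E) : Set E) :=
    hdense.mono (Set.iUnion_subset fun i => le_iSup U i)
  rw [(Submodule.dense_iff_topologicalClosure_eq_top).1 this]

end Hilbert

section Nilpotent

theorem mul_pow_succ_of_mul_mul_eq {M : Type*} [Monoid M] {t p : M} (h : p * t * p = t * p)
    (n : ℕ) : (t * p) ^ (n + 1) = t ^ (n + 1) * p := by
  induction n with
  | zero => simp
  | succ n ih => rw [pow_succ, ih, mul_assoc, ← mul_assoc p, h, ← mul_assoc, ← pow_succ]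

variable {𝕜 E : Type*} [RCLike 𝕜] [NormedAddCommGroup E] [InnerProductSpace 𝕜 E]

theorem starProjection_mul_mul_starProjection_of_mapsTo (T : E →L[𝕜] E) (U : Submodule 𝕜 E)
    [U.HasOrthogonalProjection] (hT : ∀ v ∈ U, T v ∈ U) :
    U.starProjection * T * U.starProjection = T * U.starProjection := by
  ext x
  exact Submodule.starProjection_eq_self_iff.2 (hT _ (U.starProjection_apply_mem x))

theorem apply_mem_ker_pow (T : E →L[𝕜] E) (k : ℕ) {v : E}
    (hv : v ∈ LinearMap.ker (T ^ k).toLinearMap) : T v ∈ LinearMap.ker (T ^ k).toLinearMap := by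
  simp only [LinearMap.mem_ker, coe_coe] at hv ⊢
  change (T ^ k * T) v = 0
  rw [pow_mul_comm']
  exact congrArg T hv |>.trans (map_zero T)

theorem monotone_ker_pow (T : E →L[𝕜] E) :
    Monotone fun k : ℕ => LinearMap.ker (T ^ k).toLinearMap := by
  intro a b hab v hv
  simp only [LinearMap.mem_ker, coe_coe] at hv ⊢
  rw [← pow_sub_mul_pow T hab]
  exact congrArg (T ^ (b - a)) hv |>.trans (map_zero _)

theorem mul_starProjection_ker_pow_pow_succ [CompleteSpace E] (T : E →L[𝕜] E) (k : ℕ) :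
    (T * (LinearMap.ker (T ^ k).toLinearMap).starProjection) ^ (k + 1) = 0 := by
  set U := LinearMap.ker (T ^ k).toLinearMap
  have hU : T ^ k * U.starProjection = 0 := by
    ext x
    exact U.starProjection_apply_mem x
  rw [mul_pow_succ_of_mul_mul_eq
      (starProjection_mul_mul_starProjection_of_mapsTo T U fun v => apply_mem_ker_pow T k),
    pow_succ', mul_assoc, hU, mul_zero]

end Nilpotent

section Approximation

variable {E : Type*} [NormedAddCommGroup E] [InnerProductSpace ℂ E] [CompleteSpace E]

theorem tendsto_sotStarOp_mul_starProjection {ι : Type*} [Preorder ι] (T : E →L[ℂ] E)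
    (U : ι → Submodule ℂ E)
    [∀ i, (U i).HasOrthogonalProjection] (hU : Monotone U)
    (hdense : Dense (⋃ i, (U i : Set E))) :
    Tendsto (fun i => T * (U i).starProjection) atTop (@nhds _ (sotStarOp E) T) := by
  have hP := tendsto_starProjection_self_of_dense_iUnion U hU hdense
  refine tendsto_sotStarOp_iff.2 ⟨fun x => (T.continuous.tendsto x).comp (hP x), fun f => ?_⟩
  set y := (InnerProductSpace.toDual ℂ E).symm f
  have hnorm (i : ι) : ‖f.comp (T * (U i).starProjection) - f.comp T‖ =
      ‖(U i).starProjection (adjoint T y) - adjoint T y‖ := by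
    rw [← comp_sub, norm_comp_eq_norm_adjoint_toDual_symm, ← star_eq_adjoint, star_sub,
      star_mul, (isSelfAdjoint_starProjection _).star_eq, star_eq_adjoint]
    rfl
  rw [tendsto_iff_norm_sub_tendsto_zero]
  simpa only [hnorm] using tendsto_iff_norm_sub_tendsto_zero.1 (hP (adjoint T y))

theorem mem_sotStarBall_closure_nilpotent_of_dense_iUnion_ker_pow (T : E →L[ℂ] E)
    (hT : ‖T‖ ≤ 1)
    (hdense : Dense (⋃ k : ℕ, (LinearMap.ker (T ^ k).toLinearMap : Set E))) :
    (⟨T, hT⟩ : {S : E →L[ℂ] E // ‖S‖ ≤ 1}) ∈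
      @closure _ (sotStarBall E 1) {S | ∃ k : ℕ, S.1 ^ k = 0} := by
  set K := fun k : ℕ => LinearMap.ker (T ^ k).toLinearMap
  have hnorm (k : ℕ) : ‖T * (K k).starProjection‖ ≤ 1 :=
    (norm_mul_le _ _).trans (mul_le_one₀ hT (norm_nonneg _) (K k).starProjection_norm_le)
  let _ := sotStarBall E 1
  have hconv : Tendsto
      (fun k => (⟨T * (K k).starProjection, hnorm k⟩ : {S : E →L[ℂ] E // ‖S‖ ≤ 1}))
      atTop (𝓝 ⟨T, hT⟩) :=
    tendsto_sotStarBall_iff.2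
      (tendsto_sotStarOp_mul_starProjection T K (monotone_ker_pow T) hdense)
  exact mem_closure_of_tendsto hconv
    (Eventually.of_forall fun k => ⟨k + 1, mul_starProjection_ker_pow_pow_succ T k⟩)

end Approximation

/-- If `T ∈ B_1(ℓ_2)` has dense generalized kernel `⋃ k, ker (T ^ k)`, then `T` belongs
to the SOT*-closure of the set of nilpotent contractions. -/
theorem mem_sotStar_closure_nilpotent_of_dense_generalizedKernel
    (T : lp (fun _ : ℕ => ℂ) 2 →L[ℂ] lp (fun _ : ℕ => ℂ) 2) (hT : ‖T‖ ≤ 1)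
    (hdense : Dense (⋃ k : ℕ, ((LinearMap.ker (T ^ k).toLinearMap : Submodule ℂ (lp (fun _ : ℕ => ℂ) 2)) :
      Set (lp (fun _ : ℕ => ℂ) 2)))) :
    (⟨T, hT⟩ : {S : lp (fun _ : ℕ => ℂ) 2 →L[ℂ] lp (fun _ : ℕ => ℂ) 2 // ‖S‖ ≤ 1}) ∈
      @closure _ (sotStarBall (lp (fun _ : ℕ => ℂ) 2) 1)
        {S : {S : lp (fun _ : ℕ => ℂ) 2 →L[ℂ] lp (fun _ : ℕ => ℂ) 2 // ‖S‖ ≤ 1} |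
          ∃ k : ℕ, S.1 ^ k = 0} :=
  mem_sotStarBall_closure_nilpotent_of_dense_iUnion_ker_pow T hT hdense
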